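/- arXiv:2509.16147 — 3 statements merged into one kernel-verified Lean document; each statement's English description precedes it below -/
import Mathlib

section
/- Let G be a finite group. Then the following are equivalent: (i) for all a, b ∈ G that are not conjugate in G, there is exactly one conjugacy class D of G such that b^G ⊆ a^G · D (where a^G · D = {cd : c ∈ a^G, d ∈ D}); (ii) for all x, y ∈ G with x^G ≠ (y⁻¹)^G, the setwise product x^G · y^G equals (xy)^G. -/
open scoped Classical Pointwise

/-- The conjugacy class of `x` in `G`. -/
def conjClass {G : Type*} [Group G] (x : G) : Set G := {y | ∃ g : G, g * x * g⁻¹ = y}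

/-- The adjacency matrix of a subset `C` of `G`. -/
noncomputable def adjMat (G : Type*) [Group G] (C : Set G) : Matrix G G ℂ :=
  Matrix.of fun x y => if y * x⁻¹ ∈ C then (1 : ℂ) else 0

/-- The dual idempotent of a subset `C` of `G` (base point the identity). -/
noncomputable def dualIdem (G : Type*) [Group G] (C : Set G) : Matrix G G ℂ :=
  Matrix.of fun x y => if x = y ∧ y ∈ C then (1 : ℂ) else 0

/-- The Terwilliger algebra of the group association scheme of `G`, with base point `e`. -/
noncomputable def TerwAlg (G : Type*) [Group G] [Fintype G] [DecidableEq G] : Subalgebra ℂ (Matrix G G ℂ) :=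
  Algebra.adjoin ℂ
    ((Set.range fun x : G => adjMat G (conjClass x)) ∪
     (Set.range fun x : G => dualIdem G (conjClass x)))

/-- A Camina group: a nonabelian group in which every conjugacy class outside the
commutator subgroup is a coset of the commutator subgroup. -/
def IsCamina (G : Type*) [Group G] : Prop :=
  (¬ ∀ a b : G, a * b = b * a) ∧
  ∀ x : G, x ∉ commutator G → conjClass x = x • (commutator G : Set G)

/-- The action of the unit group of a field on (the multiplicative version of) its
additive group, by multiplication. -/
noncomputable def frobAct (F : Type*) [Field F] : Fˣ →* MulAut (Multiplicative F) where
  toFun u := AddEquiv.toMultiplicative (DistribMulAction.toAddAut Fˣ F u)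
  map_one' := by ext x; exact one_smul Fˣ (Multiplicative.toAdd x)
  map_mul' u v := by ext x; exact mul_smul u v (Multiplicative.toAdd x)


/-- The Frobenius group `F ⋊ Fˣ` for `F` the field with `p ^ r` elements. -/
abbrev FrobGrp (p r : ℕ) [Fact p.Prime] : Type :=
  Multiplicative (GaloisField p r) ⋊[frobAct (GaloisField p r)] (GaloisField p r)ˣ

/-! Products of conjugacy classes are unions of conjugacy classes, and membership in such a
product can be moved across factors: `b ∈ aᴳ cᴳ ↔ c ∈ (a⁻¹)ᴳ bᴳ`. Hence Tanaka's criterion for the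
pair `(a, b)` says exactly that `(a⁻¹)ᴳ bᴳ` is a single class, namely `(a⁻¹ b)ᴳ`. -/

section ConjClassProduct

variable {G : Type*} [Group G]

theorem IsConj.inv {a b : G} (h : IsConj a b) : IsConj a⁻¹ b⁻¹ := by
  obtain ⟨c, rfl⟩ := isConj_iff.mp h
  exact isConj_iff.mpr ⟨c, by group⟩

theorem mem_conjClass_iff {x y : G} : y ∈ conjClass x ↔ IsConj x y :=
  isConj_iff.symm

theorem self_mem_conjClass (x : G) : x ∈ conjClass x :=
  mem_conjClass_iff.mpr (IsConj.refl x)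

theorem conjClass_eq_conjugatesOf (x : G) : conjClass x = conjugatesOf x :=
  Set.ext fun _ => mem_conjClass_iff

theorem conjClass_eq_conjClass_iff {x y : G} : conjClass x = conjClass y ↔ IsConj x y := by
  simp only [conjClass_eq_conjugatesOf, isConj_iff_conjugatesOf_eq]

theorem conjClass_eq_conjClass_inv_iff {x y : G} :
    conjClass x = conjClass y⁻¹ ↔ y ∈ conjClass x⁻¹ := by
  rw [conjClass_eq_conjClass_iff, mem_conjClass_iff]
  exact ⟨fun h => by simpa using h.inv, fun h => by simpa using h.inv⟩

theorem mem_conjClass_mul_of_isConj {x y z w : G} (hz : z ∈ conjClass x * conjClass y)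
    (hzw : IsConj z w) : w ∈ conjClass x * conjClass y := by
  obtain ⟨g, rfl⟩ := isConj_iff.mp hzw
  obtain ⟨_, ⟨c, rfl⟩, _, ⟨d, rfl⟩, rfl⟩ := hz
  exact ⟨g * (c * x * c⁻¹) * g⁻¹, ⟨g * c, by group⟩,
    g * (d * y * d⁻¹) * g⁻¹, ⟨g * d, by group⟩, by group⟩

theorem conjClass_subset_mul_iff {a b c : G} :
    conjClass b ⊆ conjClass a * conjClass c ↔ b ∈ conjClass a * conjClass c :=
  ⟨fun h => h (self_mem_conjClass b),
    fun h _ hw => mem_conjClass_mul_of_isConj h (mem_conjClass_iff.mp hw)⟩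

theorem mem_inv_conjClass_mul_of_mem_conjClass_mul {a b c : G}
    (h : b ∈ conjClass a * conjClass c) : c ∈ conjClass a⁻¹ * conjClass b := by
  obtain ⟨a', ha', c', hc', rfl⟩ := h
  have hc'_mem : c' ∈ conjClass a⁻¹ * conjClass (a' * c') :=
    ⟨a'⁻¹, mem_conjClass_iff.mpr (mem_conjClass_iff.mp ha').inv,
      a' * c', self_mem_conjClass _, by group⟩
  exact mem_conjClass_mul_of_isConj hc'_mem (mem_conjClass_iff.mp hc').symm

theorem mem_conjClass_mul_iff_mem_inv_conjClass_mul {a b c : G} :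
    b ∈ conjClass a * conjClass c ↔ c ∈ conjClass a⁻¹ * conjClass b :=
  ⟨mem_inv_conjClass_mul_of_mem_conjClass_mul,
    fun h => by simpa using mem_inv_conjClass_mul_of_mem_conjClass_mul h⟩

end ConjClassProduct

theorem stmt1_general {G : Type*} [Group G] :
    (∀ a b : G, b ∉ conjClass a →
      ∃! D : Set G, (∃ c : G, D = conjClass c) ∧ conjClass b ⊆ conjClass a * D) ↔
      (∀ x y : G, conjClass x ≠ conjClass y⁻¹ →
        conjClass x * conjClass y = conjClass (x * y)) := by
  constructor
  · intro tanaka x y hxy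
    have hD : ∀ z, z ∈ conjClass x * conjClass y → conjClass y ⊆ conjClass x⁻¹ * conjClass z :=
      fun z hz => conjClass_subset_mul_iff.mpr
        (mem_conjClass_mul_iff_mem_inv_conjClass_mul.mp (by simpa using hz))
    have hxy_mem : x * y ∈ conjClass x * conjClass y :=
      Set.mul_mem_mul (self_mem_conjClass x) (self_mem_conjClass y)
    obtain ⟨D, -, huniq⟩ := tanaka x⁻¹ y (conjClass_eq_conjClass_inv_iff.not.mp hxy)
    refine subset_antisymm (fun z hz => ?_) (conjClass_subset_mul_iff.mpr hxy_mem)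
    rw [huniq _ ⟨⟨x * y, rfl⟩, hD _ hxy_mem⟩, ← huniq _ ⟨⟨z, rfl⟩, hD z hz⟩]
    exact self_mem_conjClass z
  · intro product a b hb
    have hab : conjClass a⁻¹ ≠ conjClass b⁻¹ := by
      rw [Ne, conjClass_eq_conjClass_inv_iff, inv_inv]
      exact hb
    have hD : ∀ c, conjClass b ⊆ conjClass a * conjClass c ↔
        conjClass c = conjClass (a⁻¹ * b) := by
      intro c
      rw [conjClass_subset_mul_iff, mem_conjClass_mul_iff_mem_inv_conjClass_mul, product _ _ hab,
        mem_conjClass_iff, conjClass_eq_conjClass_iff]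
      exact isConj_comm
    refine ⟨_, ⟨⟨a⁻¹ * b, rfl⟩, (hD _).mpr rfl⟩, ?_⟩
    rintro _ ⟨⟨c, rfl⟩, hc⟩
    exact (hD c).mp hc

/-- Theorem 2.2 specialized to the Schur ring spanned by the conjugacy classes of `G`:
Tanaka's criterion is equivalent to the conjugacy-product property. -/
theorem stmt1 {G : Type*} [Group G] [Fintype G] :
    (∀ a b : G, b ∉ conjClass a →
      ∃! D : Set G, (∃ c : G, D = conjClass c) ∧ conjClass b ⊆ conjClass a * D) ↔
      (∀ x y : G, conjClass x ≠ conjClass y⁻¹ →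
        conjClass x * conjClass y = conjClass (x * y)) :=
  stmt1_general
end

section
/- Let p be a prime and r ≥ 1 with q = p^r ≥ 3, and let G = F ⋊ Fˣ be the semidirect product of the additive group of F = GaloisField p r by its unit group Fˣ acting by multiplication. Then the dimension over ℂ of the Terwilliger algebra T(G) equals p^{2r} + p^r − 1. -/
open scoped Classical Pointwise

/-! If the class of `y x⁻¹` is determined by the classes of `x` and `y` and by whether `x = y`,
the Terwilliger algebra is the algebra of matrices that are constant on the cells
`{(x, y) | x ∈ C, y ∈ D, x = y}` and `{(x, y) | x ∈ C, y ∈ D, x ≠ y}`: the generators are constant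
on cells, and conversely the indicator of a cell is `E*_C E*_D` or `E*_C (J - 1) E*_D`, where
`J = ∑ A_C`. So the dimension is the number of nonempty cells, which is `k² + k - 1` for `k`
classes when the centre is trivial, the off-diagonal cell of `({1}, {1})` being the only empty one.

In `F ⋊ Fˣ`, viewing `(a, u)` as `t ↦ u t + a`, two elements are conjugate iff they have the same
linear part `u` and, when `u = 1`, their translations are both zero or both nonzero. This gives
the cell condition, a trivial centre once `|F| ≥ 3`, and exactly `|F|` classes. -/

section CellAlgebra

open Equiv Function Matrix

variable {α β : Type*} [DecidableEq α] (κ : α → β)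

def cell (p : α × α) : β × β × Bool := (κ p.1, κ p.2, decide (p.1 = p.2))

lemma cell_perm {σ : Perm α} (hσ : ∀ x, κ (σ x) = κ x) (p : α × α) :
    cell κ (σ p.1, σ p.2) = cell κ p := by
  simp [cell, hσ]

lemma exists_perm_of_cell_eq {p q : α × α} (h : cell κ p = cell κ q) :
    ∃ σ : Perm α, (∀ x, κ (σ x) = κ x) ∧ σ p.1 = q.1 ∧ σ p.2 = q.2 := by
  obtain ⟨x, y⟩ := p
  obtain ⟨x', y'⟩ := q
  simp only [cell, Prod.mk.injEq, decide_eq_decide] at h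
  obtain ⟨hx, hy, hxy⟩ := h
  set z := swap x x' y
  have hz : κ z = κ y' := (apply_swap_eq_self hx y).trans hy
  refine ⟨(swap x x').trans (swap z y'), fun w => ?_, ?_, swap_apply_left z y'⟩
  · rw [trans_apply, apply_swap_eq_self hz, apply_swap_eq_self hx]
  · rw [trans_apply, swap_apply_left]
    by_cases hxy' : x = y
    · obtain rfl := hxy.mp hxy'
      subst hxy'
      simp [z]
    · refine swap_apply_of_ne_of_ne ?_ (mt hxy.mpr hxy')
      rw [← swap_apply_left x x']
      exact (swap x x').injective.ne hxy'

lemma range_cell_eq (hκ : Surjective κ) {a : α} (ha : ∀ x, κ x = κ a → x = a)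
    (hne : ∀ x, x ≠ a → ∃ y, κ y = κ x ∧ y ≠ x) :
    Set.range (cell κ) = {c | if c.2.2 then c.1 = c.2.1 else (c.1, c.2.1) ≠ (κ a, κ a)} := by
  ext ⟨b, b', t⟩
  constructor
  · rintro ⟨⟨x, y⟩, h⟩
    simp only [cell, Prod.mk.injEq] at h
    obtain ⟨rfl, rfl, rfl⟩ := h
    by_cases hxy : x = y
    · simp [hxy]
    · simp only [hxy, decide_false, Set.mem_ofPred_eq, Bool.false_eq_true, if_false, ne_eq,
        Prod.mk.injEq]
      exact fun h => hxy ((ha x h.1).trans (ha y h.2).symm)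
  obtain ⟨x, rfl⟩ := hκ b
  obtain ⟨y, rfl⟩ := hκ b'
  cases t
  · intro h
    simp only [Set.mem_ofPred_eq, Bool.false_eq_true, if_false, ne_eq, Prod.mk.injEq] at h
    by_cases hxy : κ x = κ y
    · have hxa : x ≠ a := fun hxa => h ⟨congrArg κ hxa, hxy ▸ congrArg κ hxa⟩
      obtain ⟨z, hz, hzx⟩ := hne x hxa
      exact ⟨(x, z), by simp [cell, hz, hxy, Ne.symm hzx]⟩
    · have hxy' : x ≠ y := fun h => hxy (congrArg κ h)
      exact ⟨(x, y), by simp [cell, hxy']⟩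
  · rintro (h : κ x = κ y)
    exact ⟨(x, x), by simp [cell, h]⟩

lemma card_range_cell [Fintype β] (hκ : Surjective κ) {a : α} (ha : ∀ x, κ x = κ a → x = a)
    (hne : ∀ x, x ≠ a → ∃ y, κ y = κ x ∧ y ≠ x) :
    Nat.card (Set.range (cell κ)) = Nat.card β * Nat.card β + Nat.card β - 1 := by
  have hrange : Set.range (cell κ) = ↑((Finset.univ.image fun b => (b, b, true)) ∪
      (({(κ a, κ a)}ᶜ : Finset (β × β)).image fun c => (c.1, c.2, false))) := by
    rw [range_cell_eq κ hκ ha hne]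
    ext ⟨b, b', t⟩
    cases t <;> simp
  have : Nonempty β := ⟨κ a⟩
  have hpos : 0 < Nat.card β := Nat.card_pos
  rw [hrange, Nat.card_coe_set_eq, Set.ncard_coe_finset, Finset.card_union_of_disjoint,
    Finset.card_image_of_injective, Finset.card_image_of_injective, Finset.card_compl,
    Finset.card_singleton, Finset.card_univ, Fintype.card_prod, ← Nat.card_eq_fintype_card]
  · have : 1 ≤ Nat.card β * Nat.card β := Nat.one_le_iff_ne_zero.mpr (by positivity)
    omega
  · intro c d h
    simpa [Prod.ext_iff] using h
  · intro b b' h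
    simpa using h
  · simp [Finset.disjoint_left]

variable [Fintype α]

def cellAlg (R : Type*) [CommSemiring R] : Subalgebra R (Matrix α α R) where
  carrier := {M | ∀ p q, cell κ p = cell κ q → M p.1 p.2 = M q.1 q.2}
  mul_mem' {M N} hM hN p q h := by
    obtain ⟨σ, hσ, h1, h2⟩ := exists_perm_of_cell_eq κ h
    simp only [mul_apply]
    refine Fintype.sum_equiv σ _ _ fun z => ?_
    rw [hM (p.1, z) (σ p.1, σ z) (cell_perm κ hσ (p.1, z)).symm,
      hN (z, p.2) (σ z, σ p.2) (cell_perm κ hσ (z, p.2)).symm, h1, h2]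
  add_mem' hM hN p q h := by simp only [Matrix.add_apply, hM p q h, hN p q h]
  algebraMap_mem' r p q h := by
    simp only [cell, Prod.mk.injEq, decide_eq_decide] at h
    simp only [algebraMap_matrix_apply, h.2.2]

noncomputable def cellAlgEquivFun (R : Type*) [CommSemiring R] :
    cellAlg κ R ≃ₗ[R] (Set.range (cell κ) → R) where
  toFun M c := (M : Matrix α α R) (Set.rangeSplitting _ c).1 (Set.rangeSplitting _ c).2
  map_add' _ _ := rfl
  map_smul' _ _ := rfl
  invFun f := ⟨of fun x y => f ⟨cell κ (x, y), (x, y), rfl⟩, fun p q h => by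
    simp only [of_apply, h]⟩
  left_inv M := Subtype.ext <| ext fun x y =>
    M.2 _ (x, y) (Set.apply_rangeSplitting (cell κ) ⟨cell κ (x, y), _, rfl⟩)
  right_inv f := funext fun c => congrArg f (Subtype.ext (Set.apply_rangeSplitting _ c))

lemma finrank_cellAlg (K : Type*) [Field K] :
    Module.finrank K (cellAlg κ K) = Nat.card (Set.range (cell κ)) := by
  rw [(cellAlgEquivFun κ K).finrank_eq, Module.finrank_fintype_fun_eq_card,
    Nat.card_eq_fintype_card]

section

variable {R : Type*} [CommRing R]

noncomputable def cellIndicator (c : β × β × Bool) : Matrix α α R :=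
  of fun x y => if cell κ (x, y) = c then 1 else 0

noncomputable def fiberProj (b : β) : Matrix α α R := diagonal fun x => if κ x = b then 1 else 0

lemma fiberProj_mem_cellAlg (b : β) : fiberProj κ b ∈ cellAlg κ R := by
  rintro ⟨x, y⟩ ⟨x', y'⟩ h
  simp only [cell, Prod.mk.injEq, decide_eq_decide] at h
  simp only [fiberProj, diagonal_apply, h.1, h.2.2]

lemma cellIndicator_eq (b b' : β) (t : Bool) :
    cellIndicator κ (b, b', t) =
      fiberProj κ b * (if t then 1 else of (fun _ _ => 1) - 1 : Matrix α α R) * fiberProj κ b' := by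
  ext x y
  simp only [cellIndicator, fiberProj, of_apply, diagonal_mul, mul_diagonal, cell, Prod.mk.injEq]
  cases t <;> by_cases hxy : x = y <;> by_cases hx : κ x = b <;> by_cases hy : κ y = b' <;>
    simp [hxy, hx, hy, one_apply]

lemma sum_smul_cellIndicator {M : Matrix α α R} (hM : M ∈ cellAlg κ R) :
    ∑ c : Set.range (cell κ), cellAlgEquivFun κ R ⟨M, hM⟩ c • cellIndicator κ c.1 = M := by
  ext x y
  rw [Matrix.sum_apply, Finset.sum_eq_single ⟨cell κ (x, y), (x, y), rfl⟩ (fun c _ hc => ?_)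
    (by simp)]
  · simp only [Matrix.smul_apply, cellIndicator, of_apply, if_true, smul_eq_mul, mul_one]
    exact hM _ (x, y) (Set.apply_rangeSplitting _ _)
  · have : cell κ (x, y) ≠ c := fun h => hc (Subtype.ext h).symm
    simp [cellIndicator, this]

lemma cellAlg_le {S : Subalgebra R (Matrix α α R)} (hJ : of (fun _ _ => 1) ∈ S)
    (hE : ∀ b, fiberProj κ b ∈ S) : cellAlg κ R ≤ S := by
  intro M hM
  rw [← sum_smul_cellIndicator κ hM]
  refine Subalgebra.sum_mem _ fun ⟨⟨b, b', t⟩, _⟩ _ => Subalgebra.smul_mem _ ?_ _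
  rw [cellIndicator_eq]
  refine mul_mem (mul_mem (hE b) ?_) (hE b')
  split
  · exact one_mem S
  · exact sub_mem hJ (one_mem S)

end

end CellAlgebra

section Terwilliger

open Matrix

variable {G : Type*} [Group G]

lemma conjClass_eq_carrier (x : G) : conjClass x = (ConjClasses.mk x).carrier := by
  ext y
  rw [ConjClasses.mem_carrier_iff_mk_eq, ConjClasses.mk_eq_mk_iff_isConj, isConj_comm, isConj_iff]
  rfl

variable [Fintype G] [DecidableEq G]

lemma dualIdem_conjClass (x : G) :
    dualIdem G (conjClass x) = fiberProj ConjClasses.mk (ConjClasses.mk x) := by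
  ext y z
  by_cases hyz : y = z
  · subst hyz
    simp [dualIdem, fiberProj, conjClass_eq_carrier, ConjClasses.mem_carrier_iff_mk_eq]
  · simp [dualIdem, fiberProj, hyz]

lemma sum_adjMat_carrier : ∑ c : ConjClasses G, adjMat G c.carrier = of fun _ _ => 1 := by
  ext x y
  simp [Matrix.sum_apply, adjMat, ConjClasses.mem_carrier_iff_mk_eq]

lemma cellAlg_le_terwAlg : cellAlg ConjClasses.mk ℂ ≤ TerwAlg G := by
  refine cellAlg_le _ ?_ fun c => ?_
  · rw [← sum_adjMat_carrier]
    refine Subalgebra.sum_mem _ fun c _ => ?_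
    obtain ⟨x, rfl⟩ := ConjClasses.mk_surjective c
    rw [← conjClass_eq_carrier]
    exact Algebra.subset_adjoin (Or.inl ⟨x, rfl⟩)
  · obtain ⟨x, rfl⟩ := ConjClasses.mk_surjective c
    rw [← dualIdem_conjClass]
    exact Algebra.subset_adjoin (Or.inr ⟨x, rfl⟩)

lemma terwAlg_le_cellAlg (hP : ∀ x y x' y' : G, IsConj x x' → IsConj y y' → (x = y ↔ x' = y') →
      IsConj (y * x⁻¹) (y' * x'⁻¹)) :
    TerwAlg G ≤ cellAlg ConjClasses.mk ℂ := by
  refine Algebra.adjoin_le ?_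
  rintro M (⟨x, rfl⟩ | ⟨x, rfl⟩)
  · rintro ⟨x₁, y₁⟩ ⟨x₂, y₂⟩ h
    simp only [cell, Prod.mk.injEq, decide_eq_decide, ConjClasses.mk_eq_mk_iff_isConj] at h
    have hq := ConjClasses.mk_eq_mk_iff_isConj.mpr (hP _ _ _ _ h.1 h.2.1 h.2.2)
    simp only [adjMat, of_apply, conjClass_eq_carrier, ConjClasses.mem_carrier_iff_mk_eq, hq]
  · change dualIdem G (conjClass x) ∈ _
    rw [dualIdem_conjClass]
    exact fiberProj_mem_cellAlg _ _

lemma finrank_terwAlg (hP : ∀ x y x' y' : G, IsConj x x' → IsConj y y' → (x = y ↔ x' = y') →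
      IsConj (y * x⁻¹) (y' * x'⁻¹))
    (hZ : Subgroup.center G = ⊥) :
    Module.finrank ℂ (TerwAlg G) =
      Nat.card (ConjClasses G) * Nat.card (ConjClasses G) + Nat.card (ConjClasses G) - 1 := by
  rw [le_antisymm (terwAlg_le_cellAlg hP) cellAlg_le_terwAlg, finrank_cellAlg]
  refine card_range_cell _ ConjClasses.mk_surjective (a := 1) (fun x hx => ?_) (fun x hx => ?_)
  · rwa [ConjClasses.mk_eq_mk_iff_isConj, isConj_one_left] at hx
  · have hxZ : x ∉ Subgroup.center G := by rwa [hZ, Subgroup.mem_bot]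
    rw [Subgroup.mem_center_iff] at hxZ
    push Not at hxZ
    obtain ⟨g, hg⟩ := hxZ
    refine ⟨g * x * g⁻¹, ConjClasses.mk_eq_mk_iff_isConj.mpr (isConj_iff.mpr ⟨g, rfl⟩).symm, ?_⟩
    rwa [Ne, mul_inv_eq_iff_eq_mul]

end Terwilliger

lemma frobAct_apply {K : Type*} [Field K] (u : Kˣ) (m : Multiplicative K) :
    frobAct K u m = Multiplicative.ofAdd (u * Multiplicative.toAdd m) := rfl

abbrev AffineGroup (K : Type*) [Field K] : Type _ := Multiplicative K ⋊[frobAct K] Kˣ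

namespace AffineGroup

open Multiplicative SemidirectProduct

variable {K : Type*} [Field K]

abbrev transl (x : AffineGroup K) : K := toAdd x.left

lemma ext_iff_transl {x y : AffineGroup K} : x = y ↔ transl x = transl y ∧ x.right = y.right := by
  rw [SemidirectProduct.ext_iff, toAdd.injective.eq_iff]

@[simp]
lemma transl_mk (t : K) (u : Kˣ) : transl (⟨ofAdd t, u⟩ : AffineGroup K) = t := rfl

@[simp]
lemma transl_one : transl (1 : AffineGroup K) = 0 := rfl

lemma right_conj (g x : AffineGroup K) : (g * x * g⁻¹).right = x.right := by
  simp only [mul_right, inv_right, mul_inv_cancel_comm]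

lemma transl_conj (g x : AffineGroup K) :
    transl (g * x * g⁻¹) = g.right * transl x + (1 - x.right) * transl g := by
  simp only [transl, mul_left, inv_left, mul_right, frobAct_apply, toAdd_mul, toAdd_ofAdd,
    toAdd_inv, Units.val_mul, Units.val_inv_eq_inv_val]
  field_simp
  ring

lemma transl_mul_inv (x y : AffineGroup K) :
    transl (y * x⁻¹) = transl y - (y.right / x.right) * transl x := by
  simp only [transl, mul_left, inv_left, frobAct_apply, toAdd_mul, toAdd_ofAdd,
    toAdd_inv, Units.val_inv_eq_inv_val]
  ring

lemma right_eq_of_isConj {x y : AffineGroup K} (h : IsConj x y) : x.right = y.right := by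
  obtain ⟨g, rfl⟩ := isConj_iff.mp h
  exact (right_conj g x).symm

lemma isConj_of_right_ne_one {x y : AffineGroup K} (h : x.right = y.right)
    (hx : (x.right : K) ≠ 1) : IsConj x y := by
  refine _root_.isConj_iff.mpr
    ⟨⟨ofAdd ((transl y - transl x) / (1 - x.right)), 1⟩, ext_iff_transl.mpr ⟨?_, ?_⟩⟩
  · rw [transl_conj, transl_mk, Units.val_one, one_mul]
    field_simp [sub_ne_zero.mpr hx.symm]
    ring
  · rw [right_conj, h]

lemma isConj_of_transl_ne_zero {x y : AffineGroup K} (h : x.right = y.right) (hx : transl x ≠ 0)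
    (hy : transl y ≠ 0) (h1 : (x.right : K) = 1) : IsConj x y := by
  refine _root_.isConj_iff.mpr
    ⟨⟨1, Units.mk0 (transl y / transl x) (div_ne_zero hy hx)⟩, ext_iff_transl.mpr ⟨?_, ?_⟩⟩
  · rw [transl_conj, h1, sub_self, zero_mul, add_zero, Units.val_mk0]
    field_simp
  · rw [right_conj, h]

lemma isConj_iff {x y : AffineGroup K} :
    IsConj x y ↔ x.right = y.right ∧ ((x.right : K) ≠ 1 ∨ (transl x = 0 ↔ transl y = 0)) := by
  refine ⟨fun h => ⟨right_eq_of_isConj h, or_iff_not_imp_left.mpr fun h1 => ?_⟩, ?_⟩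
  · obtain ⟨g, rfl⟩ := _root_.isConj_iff.mp h
    rw [not_not] at h1
    rw [transl_conj, h1, sub_self, zero_mul, add_zero, mul_eq_zero, or_iff_right (Units.ne_zero _)]
  · rintro ⟨h, h1 | hz⟩
    · exact isConj_of_right_ne_one h h1
    by_cases hx : transl x = 0
    · rw [ext_iff_transl.mpr ⟨hx.trans (hz.mp hx).symm, h⟩]
    by_cases h1 : (x.right : K) = 1
    · exact isConj_of_transl_ne_zero h hx (mt hz.mpr hx) h1
    · exact isConj_of_right_ne_one h h1

lemma transl_mul_inv_eq_zero_iff {x y : AffineGroup K} (h : y.right = x.right) :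
    transl (y * x⁻¹) = 0 ↔ x = y := by
  rw [transl_mul_inv, h, div_self (Units.ne_zero _), one_mul, sub_eq_zero, ext_iff_transl, h]
  exact ⟨fun h' => ⟨h'.symm, rfl⟩, fun h' => h'.1.symm⟩

lemma isConj_mul_inv {x y x' y' : AffineGroup K} (hx : IsConj x x') (hy : IsConj y y')
    (hxy : x = y ↔ x' = y') : IsConj (y * x⁻¹) (y' * x'⁻¹) := by
  have hr : (y * x⁻¹).right = (y' * x'⁻¹).right := by
    simp only [mul_right, inv_right, right_eq_of_isConj hx, right_eq_of_isConj hy]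
  refine isConj_iff.mpr ⟨hr, or_iff_not_imp_left.mpr fun h1 => ?_⟩
  have hyx : y.right = x.right := by
    rw [← mul_inv_eq_one, ← inv_right, ← mul_right, ← Units.val_eq_one]
    exact not_not.mp h1
  have hyx' : y'.right = x'.right := by
    rw [← right_eq_of_isConj hx, ← right_eq_of_isConj hy, hyx]
  rw [transl_mul_inv_eq_zero_iff hyx, transl_mul_inv_eq_zero_iff hyx', hxy]

lemma center_eq_bot [Nontrivial Kˣ] : Subgroup.center (AffineGroup K) = ⊥ := by
  refine (Subgroup.eq_bot_iff_forall _).mpr fun x hx => ?_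
  have hconj : ∀ g, transl (g * x * g⁻¹) = transl x := fun g => by
    rw [Subgroup.mem_center_iff.mp hx g, mul_inv_cancel_right]
  obtain ⟨w, hw⟩ := exists_ne (1 : Kˣ)
  -- conjugating by `t ↦ w t` kills the translation part, by `t ↦ t + 1` the linear part
  have h1 := hconj ⟨ofAdd 0, w⟩
  have h2 := hconj ⟨ofAdd 1, 1⟩
  rw [transl_conj, transl_mk, mul_zero, add_zero] at h1
  rw [transl_conj, transl_mk, Units.val_one, one_mul, mul_one, add_eq_left, sub_eq_zero] at h2
  refine ext_iff_transl.mpr ⟨?_, Units.ext h2.symm⟩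
  have hw' : (w : K) - 1 ≠ 0 := sub_ne_zero.mpr (mt Units.val_eq_one.mp hw)
  rw [transl_one]
  exact (mul_eq_zero.mp (by rw [sub_mul, one_mul, h1, sub_self])).resolve_left hw'

noncomputable def conjInvariant (x : AffineGroup K) : K :=
  if (x.right : K) = 1 then if transl x = 0 then 1 else 0 else x.right

lemma isConj_iff_conjInvariant_eq {x y : AffineGroup K} :
    IsConj x y ↔ conjInvariant x = conjInvariant y := by
  rw [isConj_iff, Units.ext_iff, conjInvariant, conjInvariant]
  have := x.right.ne_zero
  have := y.right.ne_zero
  split_ifs <;> grind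

lemma conjInvariant_surjective : Function.Surjective (conjInvariant (K := K)) := by
  intro t
  by_cases h1 : t = 1
  · exact ⟨1, by simp [conjInvariant, h1]⟩
  by_cases h0 : t = 0
  · exact ⟨⟨ofAdd 1, 1⟩, by simp [conjInvariant, h0]⟩
  · exact ⟨⟨1, Units.mk0 t h0⟩, by simp [conjInvariant, h1]⟩

lemma card_conjClasses : Nat.card (ConjClasses (AffineGroup K)) = Nat.card K := by
  refine Nat.card_eq_of_bijective (Quotient.lift conjInvariant fun _ _ =>
    isConj_iff_conjInvariant_eq.mp) ⟨?_, ?_⟩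
  · rintro ⟨x⟩ ⟨y⟩ h
    exact Quotient.sound (isConj_iff_conjInvariant_eq.mpr h)
  · exact conjInvariant_surjective.forall.mpr fun x => ⟨ConjClasses.mk x, rfl⟩

end AffineGroup

theorem stmt5_general (p r : ℕ) [Fact p.Prime] (hq : 3 ≤ p ^ r)
    [Fintype (FrobGrp p r)] [DecidableEq (FrobGrp p r)] :
    Module.finrank ℂ (TerwAlg (FrobGrp p r)) = p ^ (2 * r) + p ^ r - 1 := by
  have hr : r ≠ 0 := by
    rintro rfl
    norm_num at hq
  have hcard : Nat.card (GaloisField p r) = p ^ r := GaloisField.card p r hr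
  have : Nontrivial (GaloisField p r)ˣ := by
    rw [← Finite.one_lt_card_iff_nontrivial, Nat.card_units, hcard]
    omega
  rw [finrank_terwAlg (fun _ _ _ _ => AffineGroup.isConj_mul_inv) AffineGroup.center_eq_bot,
    AffineGroup.card_conjClasses, hcard, two_mul, pow_add]

/-- Theorem 4.4: the dimension of the Terwilliger algebra of the Frobenius group
`ℤ_p^r ⋊ ℤ_{p^r-1}` is `p^{2r} + p^r - 1`. -/
theorem stmt5 (p r : ℕ) [Fact p.Prime] (hr : 1 ≤ r) (hq : 3 ≤ p ^ r)
    [Fintype (FrobGrp p r)] [DecidableEq (FrobGrp p r)] :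
    Module.finrank ℂ (TerwAlg (FrobGrp p r)) = p ^ (2 * r) + p ^ r - 1 :=
  stmt5_general p r hq
end

section
/- Let p be a prime and let G be a Camina group that is a p-group of order p^n with nilpotency class 2 and center Z(G) of order p^k. Then there exists a bijection σ : (G ⧸ Z(G)) × Z(G) ≃ G such that, reindexing each adjacency matrix A_C ∈ Matrix G G ℂ of the group association scheme by σ: (i) for every g ∈ Z(G), the reindexed adjacency matrix of the (singleton) conjugacy class {g} equals the Kronecker product I ⊗ B_g, where I is the p^{n−k} × p^{n−k} identity matrix and B_g ∈ Matrix Z(G) Z(G) ℂ is defined by (B_g)_{u,v} = 1 if v·u⁻¹ = g and 0 otherwise; and (ii) for every g ∈ G with g ∉ Z(G), the reindexed adjacency matrix of the conjugacy class g^G equals the Kronecker product D_g ⊗ J, where J is the all-ones p^k × p^k matrix and D_g ∈ Matrix (G ⧸ Z(G)) (G ⧸ Z(G)) ℂ is defined by (D_g)_{s,t} = 1 if t·s⁻¹ equals the coset gZ(G) and 0 otherwise. -/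
open scoped Classical Pointwise

open Kronecker

/-! In a Camina group of class 2 the commutator subgroup is the centre: class 2 gives
`G' ≤ Z(G)`, and a central `z ∉ G'` would have `{z} = z^G = z G'`, forcing `G' = 1`.
So the conjugacy classes are the central singletons and the cosets `g Z(G)`, `g ∉ Z(G)`.
Writing elements as `r(s) z` for a transversal `r` of `Z(G)`, centrality of `z` gives
`r(t) w (r(s) z)⁻¹ = r(t) r(s)⁻¹ · w z⁻¹`; this lies in `g Z(G)` iff `t s⁻¹ = g Z(G)`,
and equals a central `g` iff `s = t` and `w z⁻¹ = g`. -/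

open Subgroup

namespace QuotientGroup

variable {G : Type*} [Group G] (N : Subgroup G)

noncomputable def prodSubgroupEquiv : (G ⧸ N) × N ≃ G where
  toFun x := x.1.out * x.2
  invFun g := (g, ⟨(g : G ⧸ N).out⁻¹ * g, by
    rw [← QuotientGroup.eq, QuotientGroup.out_eq']⟩)
  left_inv x := by
    obtain ⟨s, z⟩ := x
    have hs : ((s.out * z : G) : G ⧸ N) = s := by
      rw [mk_mul_of_mem _ z.2, QuotientGroup.out_eq']
    ext
    · exact hs
    · simp only [hs, inv_mul_cancel_left]
  right_inv g := mul_inv_cancel_left _ _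

variable {N}

@[simp]
lemma prodSubgroupEquiv_apply (x : (G ⧸ N) × N) : prodSubgroupEquiv N x = x.1.out * x.2 := rfl

@[simp]
lemma mk_prodSubgroupEquiv (x : (G ⧸ N) × N) : (prodSubgroupEquiv N x : G ⧸ N) = x.1 := by
  rw [prodSubgroupEquiv_apply, mk_mul_of_mem _ x.2.2, QuotientGroup.out_eq']

lemma prodSubgroupEquiv_mul_inv_mem_smul_iff [N.Normal] (a b : (G ⧸ N) × N) (g : G) :
    prodSubgroupEquiv N b * (prodSubgroupEquiv N a)⁻¹ ∈ g • (N : Set G) ↔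
      b.1 * a.1⁻¹ = g := by
  rw [Set.mem_smul_set_iff_inv_smul_mem, smul_eq_mul, SetLike.mem_coe, ← QuotientGroup.eq,
    mk_mul, mk_inv, mk_prodSubgroupEquiv, mk_prodSubgroupEquiv, eq_comm]

lemma prodSubgroupEquiv_mul_inv_eq_iff (hN : N ≤ center G) (a b : (G ⧸ N) × N) {g : G}
    (hg : g ∈ N) :
    prodSubgroupEquiv N b * (prodSubgroupEquiv N a)⁻¹ = g ↔
      a.1 = b.1 ∧ (b.2 : G) * (a.2 : G)⁻¹ = g := by
  have hc : (b.2 : G) * (a.2 : G)⁻¹ ∈ center G := hN (mul_mem b.2.2 (inv_mem a.2.2))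
  have hsplit : prodSubgroupEquiv N b * (prodSubgroupEquiv N a)⁻¹ =
      b.1.out * a.1.out⁻¹ * ((b.2 : G) * (a.2 : G)⁻¹) := by
    calc prodSubgroupEquiv N b * (prodSubgroupEquiv N a)⁻¹
        = b.1.out * ((b.2 : G) * (a.2 : G)⁻¹) * a.1.out⁻¹ := by
          simp only [prodSubgroupEquiv_apply]
          group
      _ = b.1.out * a.1.out⁻¹ * ((b.2 : G) * (a.2 : G)⁻¹) := by
        rw [mul_assoc, ← mem_center_iff.mp hc, mul_assoc]
  constructor
  · intro h
    have hab : a.1 = b.1 := by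
      rw [← mk_prodSubgroupEquiv a, ← mk_prodSubgroupEquiv b, eq_mul_of_mul_inv_eq h,
        ← mem_center_iff.mp (hN hg), mk_mul_of_mem _ hg]
    refine ⟨hab, ?_⟩
    rwa [hsplit, hab, mul_inv_cancel, one_mul] at h
  · rintro ⟨hab, h⟩
    rw [hsplit, hab, mul_inv_cancel, one_mul, h]

end QuotientGroup

section AdjacencyMatrix

open QuotientGroup

variable {G : Type*} [Group G] {N : Subgroup G}

lemma adjMat_singleton_reindex [DecidableEq (G ⧸ N)] (hN : N ≤ center G) {g : G}
    (hg : g ∈ N) :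
    Matrix.of (fun a b => adjMat G {g} (prodSubgroupEquiv N a) (prodSubgroupEquiv N b)) =
      (1 : Matrix (G ⧸ N) (G ⧸ N) ℂ) ⊗ₖ
        Matrix.of fun u v : N => if (v : G) * (u : G)⁻¹ = g then (1 : ℂ) else 0 := by
  ext a b
  simp only [Matrix.of_apply, adjMat, Matrix.kroneckerMap_apply, Matrix.one_apply,
    Set.mem_singleton_iff, prodSubgroupEquiv_mul_inv_eq_iff hN a b hg]
  split_ifs <;> simp_all

lemma adjMat_smul_reindex [N.Normal] [DecidableEq (G ⧸ N)] (g : G) :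
    Matrix.of (fun a b =>
        adjMat G (g • (N : Set G)) (prodSubgroupEquiv N a) (prodSubgroupEquiv N b)) =
      (Matrix.of fun s t : G ⧸ N => if t * s⁻¹ = (g : G ⧸ N) then (1 : ℂ) else 0) ⊗ₖ
        Matrix.of fun _ _ : N => (1 : ℂ) := by
  ext a b
  simp only [Matrix.of_apply, adjMat, Matrix.kroneckerMap_apply, mul_one,
    prodSubgroupEquiv_mul_inv_mem_smul_iff]

end AdjacencyMatrix

section Camina

variable {G : Type*} [Group G]

lemma conjClass_eq_singleton_of_mem_center {g : G} (hg : g ∈ center G) : conjClass g = {g} := by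
  ext y
  constructor
  · rintro ⟨h, rfl⟩
    rw [Set.mem_singleton_iff, mem_center_iff.mp hg h, mul_inv_cancel_right]
  · rintro rfl
    exact ⟨1, by simp⟩

lemma IsCamina.commutator_eq_center (hcam : IsCamina G)
    (hnil : (⊤ : Subgroup G).lowerCentralSeries 2 = ⊥) : commutator G = center G := by
  apply le_antisymm
  · rwa [Subgroup.lowerCentralSeries_succ, top_lowerCentralSeries_one,
      commutator_top_right_eq_bot_iff_le_center] at hnil
  · intro z hz
    by_contra hzc
    have hbot : commutator G = ⊥ := by
      refine eq_bot_iff.mpr fun c hc => ?_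
      have hzc' : z * c ∈ conjClass z := by
        rw [hcam.2 z hzc]
        exact Set.smul_mem_smul_set hc
      rwa [conjClass_eq_singleton_of_mem_center hz, Set.mem_singleton_iff, mul_eq_left] at hzc'
    rw [_root_.commutator_def, commutator_top_left_eq_bot_iff_le_center] at hbot
    exact hcam.1 fun a b => mem_center_iff.mp (hbot (mem_top b)) a

end Camina

theorem stmt16_general {G : Type*} [Group G] [Fintype G]
    (hcam : IsCamina G)
    (hnil : (⊤ : Subgroup G).lowerCentralSeries 2 = ⊥ ∧ (⊤ : Subgroup G).lowerCentralSeries 1 ≠ ⊥) :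
    ∃ σ : (G ⧸ Subgroup.center G) × (Subgroup.center G) ≃ G,
      (∀ g ∈ Subgroup.center G,
        Matrix.of (fun a b => adjMat G (conjClass g) (σ a) (σ b)) =
          (1 : Matrix (G ⧸ Subgroup.center G) (G ⧸ Subgroup.center G) ℂ) ⊗ₖ
            (Matrix.of fun u v : Subgroup.center G =>
              if (v : G) * (u : G)⁻¹ = g then (1 : ℂ) else 0)) ∧
      (∀ g : G, g ∉ Subgroup.center G →
        Matrix.of (fun a b => adjMat G (conjClass g) (σ a) (σ b)) =
          (Matrix.of fun s t : G ⧸ Subgroup.center G =>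
              if t * s⁻¹ = (QuotientGroup.mk g : G ⧸ Subgroup.center G) then (1 : ℂ) else 0) ⊗ₖ
            (Matrix.of fun _ _ : Subgroup.center G => (1 : ℂ))) := by
  have hG' : commutator G = center G := hcam.commutator_eq_center hnil.1
  refine ⟨QuotientGroup.prodSubgroupEquiv (center G), fun g hg => ?_, fun g hg => ?_⟩
  · rw [conjClass_eq_singleton_of_mem_center hg]
    exact adjMat_singleton_reindex le_rfl hg
  · rw [hcam.2 g (by rwa [hG']), hG']
    exact adjMat_smul_reindex g

/-- Lemmas 5.6 and 5.7: the adjacency matrices of the group association scheme of a Camina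
`p`-group of nilpotency class `2`, suitably reindexed, are Kronecker products exhibiting
the wreath-product structure `G(Z(G)) ≀ G(G/Z(G))`. -/
theorem stmt16 (p n k : ℕ) (hp : p.Prime) {G : Type*} [Group G] [Fintype G]
    (hpg : IsPGroup p G) (hcam : IsCamina G)
    (hcard : Fintype.card G = p ^ n)
    (hnil : (⊤ : Subgroup G).lowerCentralSeries 2 = ⊥ ∧ (⊤ : Subgroup G).lowerCentralSeries 1 ≠ ⊥)
    (hZ : Nat.card (Subgroup.center G) = p ^ k) :
    ∃ σ : (G ⧸ Subgroup.center G) × (Subgroup.center G) ≃ G,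
      (∀ g ∈ Subgroup.center G,
        Matrix.of (fun a b => adjMat G (conjClass g) (σ a) (σ b)) =
          (1 : Matrix (G ⧸ Subgroup.center G) (G ⧸ Subgroup.center G) ℂ) ⊗ₖ
            (Matrix.of fun u v : Subgroup.center G =>
              if (v : G) * (u : G)⁻¹ = g then (1 : ℂ) else 0)) ∧
      (∀ g : G, g ∉ Subgroup.center G →
        Matrix.of (fun a b => adjMat G (conjClass g) (σ a) (σ b)) =
          (Matrix.of fun s t : G ⧸ Subgroup.center G =>
              if t * s⁻¹ = (QuotientGroup.mk g : G ⧸ Subgroup.center G) then (1 : ℂ) else 0) ⊗ₖ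
            (Matrix.of fun _ _ : Subgroup.center G => (1 : ℂ))) :=
  stmt16_general hcam hnil
end
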